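/- arXiv:2507.02918 — 7 statements merged into one kernel-verified Lean document; each statement's English description precedes it below -/
import Mathlib

section
/- If x and y are preimputations such that x outvotes y via some coalition S (i.e., e_S(x) ≥ 0, x_i > y_i for all i ∈ S, and x(T) ≥ v(T) for all coalitions T not contained in S), then the set of coalitions with positive excess at x is contained in the set of coalitions with positive excess at y, and moreover every coalition with positive excess at x has strictly smaller excess at x than at y. -/
open Finset
open scoped RealInnerProductSpace

noncomputable section
variable {N : Type*} [Fintype N] [DecidableEq N]

/-- Indicator vector of a coalition. -/
def indic (S : Finset N) : EuclideanSpace ℝ N := WithLp.toLp 2 (fun i => if i ∈ S then (1:ℝ) else 0)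

/-- η^S = 1^S - (s/n)·1^N. -/
def eta (S : Finset N) : EuclideanSpace ℝ N :=
  WithLp.toLp 2 (fun i => (if i ∈ S then (1:ℝ) else 0) - (S.card : ℝ) / (Fintype.card N))

/-- Excess e_S(x) = v(S) - x(S). -/
def excess (v : Finset N → ℝ) (S : Finset N) (x : EuclideanSpace ℝ N) : ℝ :=
  v S - ∑ i ∈ S, x i

/-- Dissatisfaction field ϑ. -/
def dissat (v : Finset N → ℝ) (x : EuclideanSpace ℝ N) : ℝ :=
  (1/2) * ∑ S ∈ univ.filter (· ≠ (∅ : Finset N)), (max 0 (excess v S x))^2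

/-- Cohesion field φ. -/
def phi (v : Finset N → ℝ) (x : EuclideanSpace ℝ N) : EuclideanSpace ℝ N :=
  ∑ S ∈ univ.filter (· ≠ (∅ : Finset N)), max 0 (excess v S x) • eta S

/-- The core. -/
def core (v : Finset N → ℝ) : Set (EuclideanSpace ℝ N) :=
  {x | (∑ i, x i) = 0 ∧ ∀ S : Finset N, S.Nonempty → excess v S x ≤ 0}

/-- A balanced collection of (nonempty) coalitions. -/
def IsBalancedColl (B : Finset (Finset N)) : Prop :=
  (∀ S ∈ B, S.Nonempty) ∧
    ∃ lam : Finset N → ℝ, (∀ S ∈ B, 0 < lam S) ∧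
      ∑ S ∈ B, lam S • indic S = indic (univ : Finset N)

/-- Outvoting relation. -/
def Outvotes (v : Finset N → ℝ) (x y : EuclideanSpace ℝ N) : Prop :=
  ∃ S : Finset N, S.Nonempty ∧ 0 ≤ excess v S x ∧ (∀ i ∈ S, y i < x i) ∧
    ∀ T : Finset N, T.Nonempty → ¬ T ⊆ S → v T ≤ ∑ i ∈ T, x i

omit [Fintype N] in
theorem subset_of_excess_pos {v : Finset N → ℝ} {x : EuclideanSpace ℝ N} {S T : Finset N}
    (hx : ∀ T : Finset N, T.Nonempty → ¬ T ⊆ S → v T ≤ ∑ i ∈ T, x i)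
    (hT : T.Nonempty) (hTx : 0 < excess v T x) : T ⊆ S := by
  by_contra hTS
  have := hx T hT hTS
  rw [excess] at hTx
  linarith

omit [Fintype N] [DecidableEq N] in
theorem excess_lt_excess_of_lt {v : Finset N → ℝ} {x y : EuclideanSpace ℝ N} {T : Finset N}
    (hT : T.Nonempty) (hxy : ∀ i ∈ T, y i < x i) : excess v T x < excess v T y :=
  sub_lt_sub_left (sum_lt_sum_of_nonempty hT hxy) (v T)

theorem stmt_4_general (v : Finset N → ℝ) (x y : EuclideanSpace ℝ N)
    (S : Finset N)
    (h2 : ∀ i ∈ S, y i < x i)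
    (h3 : ∀ T : Finset N, T.Nonempty → ¬ T ⊆ S → v T ≤ ∑ i ∈ T, x i) :
    ∀ T : Finset N, T.Nonempty → 0 < excess v T x →
      0 < excess v T y ∧ excess v T x < excess v T y := by
  intro T hT hTx
  have hTS : T ⊆ S := subset_of_excess_pos h3 hT hTx
  have hlt : excess v T x < excess v T y :=
    excess_lt_excess_of_lt hT fun i hi => h2 i (hTS hi)
  exact ⟨hTx.trans hlt, hlt⟩

theorem stmt_4 (v : Finset N → ℝ) (hv : v univ = 0) (x y : EuclideanSpace ℝ N)
    (hx : (∑ i, x i) = 0) (hy : (∑ i, y i) = 0) (S : Finset N) (hS : S.Nonempty)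
    (h1 : 0 ≤ excess v S x) (h2 : ∀ i ∈ S, y i < x i)
    (h3 : ∀ T : Finset N, T.Nonempty → ¬ T ⊆ S → v T ≤ ∑ i ∈ T, x i) :
    ∀ T : Finset N, T.Nonempty → 0 < excess v T x →
      0 < excess v T y ∧ excess v T x < excess v T y :=
  stmt_4_general v x y S h2 h3

end
end

section
/- If x and y are preimputations such that x outvotes y, then ϑ(x) ≤ ϑ(y), where ϑ is the dissatisfaction field. -/
open Finset
open scoped RealInnerProductSpace

noncomputable section
variable {N : Type*} [Fintype N] [DecidableEq N]

omit [Fintype N] [DecidableEq N] in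
lemma excess_anti {v : Finset N → ℝ} {T : Finset N} {x y : EuclideanSpace ℝ N}
    (h : ∀ i ∈ T, y i ≤ x i) : excess v T x ≤ excess v T y :=
  sub_le_sub_left (sum_le_sum h) _

omit [Fintype N] [DecidableEq N] in
lemma excess_nonpos_iff {v : Finset N → ℝ} {T : Finset N} {x : EuclideanSpace ℝ N} :
    excess v T x ≤ 0 ↔ v T ≤ ∑ i ∈ T, x i :=
  sub_nonpos

lemma dissat_mono {v : Finset N → ℝ} {x y : EuclideanSpace ℝ N}
    (h : ∀ T : Finset N, T.Nonempty → max 0 (excess v T x) ≤ max 0 (excess v T y)) :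
    dissat v x ≤ dissat v y := by
  unfold dissat
  gcongr (1 / 2) * ?_
  refine sum_le_sum fun T hT => pow_le_pow_left₀ (le_max_left _ _) ?_ 2
  exact h T (nonempty_iff_ne_empty.mpr (mem_filter.mp hT).2)

omit [Fintype N] in
/-- Coalitions inside the outvoting coalition lose excess at `x`, the others have none. -/
lemma Outvotes.max_zero_excess_le {v : Finset N → ℝ} {x y : EuclideanSpace ℝ N}
    (hxy : Outvotes v x y) (T : Finset N) :
    max 0 (excess v T x) ≤ max 0 (excess v T y) := by
  obtain ⟨S, -, -, hdom, hout⟩ := hxy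
  by_cases hTS : T ⊆ S
  · exact max_le_max le_rfl (excess_anti fun i hi => (hdom i (hTS hi)).le)
  · have hTne : T.Nonempty := nonempty_iff_ne_empty.mpr fun hT => hTS (hT ▸ empty_subset S)
    rw [max_eq_left (excess_nonpos_iff.mpr (hout T hTne hTS))]
    exact le_max_left _ _

theorem stmt_5_general (v : Finset N → ℝ) (x y : EuclideanSpace ℝ N) (hxy : Outvotes v x y) :
    dissat v x ≤ dissat v y :=
  dissat_mono fun T _ => hxy.max_zero_excess_le T

theorem stmt_5 (v : Finset N → ℝ) (hv : v univ = 0) (x y : EuclideanSpace ℝ N)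
    (hx : (∑ i, x i) = 0) (hy : (∑ i, y i) = 0) (hxy : Outvotes v x y) :
    dissat v x ≤ dissat v y :=
  stmt_5_general v x y hxy

end
end

section
/- For any balanced game (N, v) with v(N)=0 and any preimputation x not in the core C(v), the collection φ(x) = {S : e_S(x) > 0} is nonempty and unbalanced (i.e., it contains no balanced subcollection). -/
open Finset
open scoped RealInnerProductSpace

noncomputable section
variable {N : Type*} [Fintype N] [DecidableEq N]

/-!
If a preimputation `x` had a balanced collection `𝓑` of coalitions with positive excess, then
averaging the excesses with the balancing weights `λ` would give
`0 < ∑ λ_S e_S(x) = ∑ λ_S v(S) - x(N) = ∑ λ_S v(S)`. But any core element `y` satisfies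
`∑ λ_S v(S) ≤ ∑ λ_S y(S) = y(N) = 0`, which is the easy half of the Bondareva–Shapley theorem.
-/

variable {B : Finset (Finset N)} {lam : Finset N → ℝ}

lemma sum_mul_sum_eq_sum_of_sum_smul_indic
    (hsum : ∑ S ∈ B, lam S • indic S = indic (univ : Finset N)) (z : EuclideanSpace ℝ N) :
    ∑ S ∈ B, lam S * ∑ i ∈ S, z i = ∑ i, z i := by
  have hcover : ∀ i, ∑ S ∈ B, lam S * indic S i = 1 := fun i => by
    simpa [indic, WithLp.ofLp_sum, Finset.sum_apply] using
      congrArg (fun w : EuclideanSpace ℝ N => w i) hsum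
  calc ∑ S ∈ B, lam S * ∑ i ∈ S, z i
      = ∑ S ∈ B, ∑ i, lam S * indic S i * z i := by
        refine Finset.sum_congr rfl fun S _ => ?_
        simp [indic, Finset.mul_sum, Finset.sum_ite_mem]
    _ = ∑ i, (∑ S ∈ B, lam S * indic S i) * z i := by
        rw [Finset.sum_comm]
        simp only [Finset.sum_mul]
    _ = ∑ i, z i := by simp [hcover]

lemma sum_mul_excess_eq (v : Finset N → ℝ)
    (hsum : ∑ S ∈ B, lam S • indic S = indic (univ : Finset N)) (x : EuclideanSpace ℝ N) :
    ∑ S ∈ B, lam S * excess v S x = ∑ S ∈ B, lam S * v S - ∑ i, x i := by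
  simp only [excess, mul_sub, Finset.sum_sub_distrib,
    sum_mul_sum_eq_sum_of_sum_smul_indic hsum]

lemma sum_mul_le_zero_of_mem_core {v : Finset N → ℝ} {y : EuclideanSpace ℝ N}
    (hy : y ∈ core v) (hne : ∀ S ∈ B, S.Nonempty) (hlam : ∀ S ∈ B, 0 ≤ lam S)
    (hsum : ∑ S ∈ B, lam S • indic S = indic (univ : Finset N)) :
    ∑ S ∈ B, lam S * v S ≤ 0 := by
  have hexcess : ∑ S ∈ B, lam S * excess v S y ≤ 0 :=
    Finset.sum_nonpos fun S hS => mul_nonpos_of_nonneg_of_nonpos (hlam S hS) (hy.2 S (hne S hS))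
  rw [sum_mul_excess_eq v hsum, hy.1] at hexcess
  linarith

lemma IsBalancedColl.nonempty [Nonempty N] (hB : IsBalancedColl B) : B.Nonempty := by
  obtain ⟨-, lam, -, hsum⟩ := hB
  rw [Finset.nonempty_iff_ne_empty]
  rintro rfl
  obtain ⟨i⟩ := ‹Nonempty N›
  simpa [indic] using congrArg (fun w : EuclideanSpace ℝ N => w i) hsum

theorem stmt_7_general (v : Finset N → ℝ)
    (hbal : (core v).Nonempty) (x : EuclideanSpace ℝ N) (hx : (∑ i, x i) = 0)
    (hxc : x ∉ core v) :
    (∃ S : Finset N, S.Nonempty ∧ 0 < excess v S x) ∧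
      ∀ B : Finset (Finset N), (∀ S ∈ B, S.Nonempty ∧ 0 < excess v S x) →
        ¬ IsBalancedColl B := by
  obtain ⟨S, hS, hSx⟩ : ∃ S : Finset N, S.Nonempty ∧ 0 < excess v S x := by
    simpa [core, hx] using hxc
  have : Nonempty N := ⟨hS.choose⟩
  refine ⟨⟨S, hS, hSx⟩, fun B hB hBbal => ?_⟩
  obtain ⟨y, hy⟩ := hbal
  have hBne := hBbal.nonempty
  obtain ⟨hne, lam, hlam, hsum⟩ := hBbal
  have hpos : 0 < ∑ S ∈ B, lam S * excess v S x :=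
    Finset.sum_pos (fun S hS => mul_pos (hlam S hS) (hB S hS).2) hBne
  have hle := sum_mul_le_zero_of_mem_core hy hne (fun S hS => (hlam S hS).le) hsum
  rw [sum_mul_excess_eq v hsum, hx] at hpos
  linarith

theorem stmt_7 [Nonempty N] (v : Finset N → ℝ) (hv : v univ = 0)
    (hbal : (core v).Nonempty) (x : EuclideanSpace ℝ N) (hx : (∑ i, x i) = 0)
    (hxc : x ∉ core v) :
    (∃ S : Finset N, S.Nonempty ∧ 0 < excess v S x) ∧
      ∀ B : Finset (Finset N), (∀ S ∈ B, S.Nonempty ∧ 0 < excess v S x) →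
        ¬ IsBalancedColl B :=
  stmt_7_general v hbal x hx hxc

end
end

section
/- For a balanced game (N, v) with v(N) = 0, the core C(v) equals the zero set of the cohesion field: C(v) = {x ∈ X : φ(x) = 0}, where φ(x) = ∑_{S∈𝓝} max(0, v(S) - x(S))·η^S. -/
/-!
For `x` with `x(N) = 0` and a core point `y`, `z = y - x` also sums to zero, so `⟪z, η^S⟫ = z(S)`
and `⟪z, φ(x)⟫ = ∑_S c_S (e_S(x) - e_S(y))` with `c_S = e_S(x)⁺`. Since `e_S(y) ≤ 0`, each summand
is at least `c_S²`; hence `φ(x) = 0` forces every `c_S` to vanish, i.e. `x ∈ C(v)`.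
-/

open Finset
open scoped RealInnerProductSpace

noncomputable section
variable {N : Type*} [Fintype N] [DecidableEq N]

omit [Fintype N] [DecidableEq N] in
lemma sum_sub_eq_excess_sub (v : Finset N → ℝ) (T : Finset N) (x y : EuclideanSpace ℝ N) :
    ∑ i ∈ T, (y i - x i) = excess v T x - excess v T y := by
  simp only [excess, Finset.sum_sub_distrib]; ring

lemma inner_eta_of_sum_eq_zero {z : EuclideanSpace ℝ N} (hz : ∑ i, z i = 0) (T : Finset N) :
    ⟪z, eta T⟫ = ∑ i ∈ T, z i := by
  simp only [eta, PiLp.inner_apply, RCLike.inner_apply, conj_trivial, sub_mul, ite_mul, one_mul,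
    zero_mul, Finset.sum_sub_distrib, Finset.sum_ite_mem, Finset.univ_inter, ← Finset.mul_sum, hz,
    mul_zero, sub_zero]

lemma inner_phi_of_sum_eq_zero (v : Finset N → ℝ) (x : EuclideanSpace ℝ N)
    {z : EuclideanSpace ℝ N} (hz : ∑ i, z i = 0) :
    ⟪z, phi v x⟫ = ∑ S ∈ univ.filter (· ≠ ∅), max 0 (excess v S x) * ∑ i ∈ S, z i := by
  simp only [phi, inner_sum, inner_smul_right, inner_eta_of_sum_eq_zero hz]

lemma max_zero_sq_le_mul_sub {e e' : ℝ} (he' : e' ≤ 0) : max 0 e ^ 2 ≤ max 0 e * (e - e') := by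
  rcases le_total e 0 with he | he
  · simp [max_eq_left he]
  · rw [max_eq_right he]; nlinarith

lemma phi_eq_zero_of_mem_core {v : Finset N → ℝ} {x : EuclideanSpace ℝ N} (hx : x ∈ core v) :
    phi v x = 0 :=
  Finset.sum_eq_zero fun S hS => by
    rw [max_eq_left (hx.2 S (nonempty_iff_ne_empty.2 (mem_filter.1 hS).2)), zero_smul]

lemma excess_nonpos_of_phi_eq_zero {v : Finset N → ℝ} {x y : EuclideanSpace ℝ N}
    (hy : y ∈ core v) (hx : ∑ i, x i = 0) (hphi : phi v x = 0) {S : Finset N}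
    (hS : S.Nonempty) : excess v S x ≤ 0 := by
  have hyx : ∑ i, (y - x) i = 0 := by simp [Finset.sum_sub_distrib, hy.1, hx]
  have hsum : ∑ T ∈ univ.filter (· ≠ ∅),
      max 0 (excess v T x) * (excess v T x - excess v T y) = 0 := by
    have h := inner_phi_of_sum_eq_zero v x hyx
    simp only [hphi, inner_zero_right, PiLp.sub_apply, sum_sub_eq_excess_sub v] at h
    exact h.symm
  have hsq : ∀ T ∈ univ.filter (· ≠ ∅),
      max 0 (excess v T x) ^ 2 ≤ max 0 (excess v T x) * (excess v T x - excess v T y) :=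
    fun T hT => max_zero_sq_le_mul_sub (hy.2 T (nonempty_iff_ne_empty.2 (mem_filter.1 hT).2))
  have hS' : S ∈ univ.filter (· ≠ ∅) := mem_filter.2 ⟨mem_univ S, hS.ne_empty⟩
  have hterm_zero := (sum_eq_zero_iff_of_nonneg fun T hT => (sq_nonneg _).trans (hsq T hT)).1 hsum S hS'
  have hpos : max 0 (excess v S x) = 0 :=
    pow_eq_zero_iff two_ne_zero |>.1 (le_antisymm ((hsq S hS').trans_eq hterm_zero) (sq_nonneg _))
  exact max_eq_left_iff.1 hpos

theorem stmt_8_general (v : Finset N → ℝ)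
    (hbal : (core v).Nonempty) :
    core v = {x : EuclideanSpace ℝ N | (∑ i, x i) = 0 ∧ phi v x = 0} := by
  obtain ⟨y, hy⟩ := hbal
  ext x
  exact ⟨fun hx => ⟨hx.1, phi_eq_zero_of_mem_core hx⟩,
    fun ⟨hx, hphi⟩ => ⟨hx, fun S hS => excess_nonpos_of_phi_eq_zero hy hx hphi hS⟩⟩

theorem stmt_8 [Nonempty N] (v : Finset N → ℝ) (hv : v univ = 0)
    (hbal : (core v).Nonempty) :
    core v = {x : EuclideanSpace ℝ N | (∑ i, x i) = 0 ∧ phi v x = 0} :=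
  stmt_8_general v hbal
end
end

section
/- If a nonempty collection 𝓒 of coalitions is unbalanced (contains no balanced subcollection), then for any positive weights θ_S > 0 (S ∈ 𝓒), the sum ∑_{S∈𝓒} θ_S η^S is nonzero. -/
/-!
If `∑ θ_S η^S = 0`, then `∑ θ_S 1^S = c · 1^N` with `c = (∑ θ_S |S|) / n > 0`, so the weights
`θ_S / c` exhibit `𝓒` itself as a balanced collection.
-/

open Finset
open scoped RealInnerProductSpace

noncomputable section
variable {N : Type*} [Fintype N] [DecidableEq N]

theorem eta_eq_indic_sub (S : Finset N) :
    eta S = indic S - ((S.card : ℝ) / Fintype.card N) • indic (univ : Finset N) := by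
  ext i
  simp [eta, indic]

theorem sum_smul_eta (C : Finset (Finset N)) (θ : Finset N → ℝ) :
    ∑ S ∈ C, θ S • eta S =
      ∑ S ∈ C, θ S • indic S
        - ((∑ S ∈ C, θ S * S.card) / Fintype.card N) • indic (univ : Finset N) := by
  simp only [eta_eq_indic_sub, smul_sub, sum_sub_distrib, smul_smul, ← sum_smul, sum_div,
    mul_div_assoc]

theorem isBalancedColl_of_sum_smul_indic_eq_smul_univ {B : Finset (Finset N)}
    (hB : ∀ S ∈ B, S.Nonempty) {θ : Finset N → ℝ} (hθ : ∀ S ∈ B, 0 < θ S) {c : ℝ} (hc : 0 < c)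
    (h : ∑ S ∈ B, θ S • indic S = c • indic (univ : Finset N)) : IsBalancedColl B := by
  refine ⟨hB, fun S => θ S / c, fun S hS => div_pos (hθ S hS) hc, ?_⟩
  calc ∑ S ∈ B, (θ S / c) • indic S = c⁻¹ • ∑ S ∈ B, θ S • indic S := by
        simp only [smul_sum, smul_smul, div_eq_inv_mul]
    _ = indic univ := by rw [h, smul_smul, inv_mul_cancel₀ hc.ne', one_smul]

theorem stmt_9 [Nonempty N] (C : Finset (Finset N)) (hC : C.Nonempty)
    (hCne : ∀ S ∈ C, S.Nonempty)
    (hunb : ∀ B ⊆ C, ¬ IsBalancedColl B)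
    (θ : Finset N → ℝ) (hθ : ∀ S ∈ C, 0 < θ S) :
    ∑ S ∈ C, θ S • eta S ≠ (0 : EuclideanSpace ℝ N) := by
  intro h
  rw [sum_smul_eta, sub_eq_zero] at h
  have hc : 0 < (∑ S ∈ C, θ S * S.card) / Fintype.card N :=
    div_pos (sum_pos (fun S hS => mul_pos (hθ S hS) (by exact_mod_cast (hCne S hS).card_pos)) hC)
      (by exact_mod_cast Fintype.card_pos)
  exact hunb C Subset.rfl (isBalancedColl_of_sum_smul_indic_eq_smul_univ hCne hθ hc h)
end
end

section
/- Along any cohesion curve, the dissatisfaction strictly decreases outside the core: if γ : ℝ → X satisfies γ'(t) = φ(γ(t)), then for any t with γ(t) ∉ C(v) (for a balanced game), the derivative d/dt ϑ(γ(t)) = -‖φ(γ(t))‖² < 0. -/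
open Finset
open scoped RealInnerProductSpace

noncomputable section
variable {N : Type*} [Fintype N] [DecidableEq N]

/-! The gradient of `dissat v` in `ℝ^N` is `-∑ S, (excess v S x)⁺ • indic S`, and `eta S`, `indic S`
have the same inner product with every vector of `X`; so along a curve with velocity `w ∈ X` the
derivative of `dissat v` is `-⟪phi v x, w⟫`, which is `-‖phi v x‖²` on a cohesion curve.
If `y` is in the core then `excess v S x ≤ ⟪indic S, y - x⟫` for every `S`, whence
`⟪phi v x, y - x⟫ ≥ 2 * dissat v x > 0` off the core, and `phi v x ≠ 0`. -/

theorem hasDerivAt_max_zero_sq (a : ℝ) :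
    HasDerivAt (fun r : ℝ => max 0 r ^ 2) (2 * max 0 a) a := by
  rcases lt_trichotomy a 0 with ha | rfl | ha
  · have he : (fun r : ℝ => max 0 r ^ 2) =ᶠ[nhds a] fun _ => 0 := by
      filter_upwards [eventually_lt_nhds ha] with r hr
      simp [max_eq_left hr.le]
    simpa [max_eq_left ha.le] using (hasDerivAt_const a (0 : ℝ)).congr_of_eventuallyEq he
  · have hneg : HasDerivWithinAt (fun r : ℝ => max 0 r ^ 2) 0 (Set.Iic 0) 0 :=
      (hasDerivWithinAt_const (0 : ℝ) _ (0 : ℝ)).congr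
        (fun r (hr : r ≤ 0) => by simp [max_eq_left hr]) (by simp)
    have hpos : HasDerivWithinAt (fun r : ℝ => max 0 r ^ 2) 0 (Set.Ici 0) 0 := by
      simpa using ((hasDerivAt_pow 2 (0 : ℝ)).hasDerivWithinAt (s := Set.Ici 0)).congr
        (fun r (hr : 0 ≤ r) => by simp [max_eq_right hr]) (by simp)
    simpa [Set.Iic_union_Ici, hasDerivWithinAt_univ] using hneg.union hpos
  · have he : (fun r : ℝ => max 0 r ^ 2) =ᶠ[nhds a] fun r => r ^ 2 := by
      filter_upwards [eventually_gt_nhds ha] with r hr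
      simp [max_eq_right hr.le]
    simpa [max_eq_right ha.le] using (hasDerivAt_pow 2 a).congr_of_eventuallyEq he

theorem inner_indic (S : Finset N) (w : EuclideanSpace ℝ N) : ⟪indic S, w⟫ = ∑ i ∈ S, w i := by
  simp [indic, PiLp.inner_apply, Finset.sum_ite_mem]

theorem inner_eta (S : Finset N) {w : EuclideanSpace ℝ N} (hw : ∑ i, w i = 0) :
    ⟪eta S, w⟫ = ⟪indic S, w⟫ := by
  simp [eta, indic, PiLp.inner_apply, mul_sub, Finset.sum_sub_distrib, ← Finset.sum_mul, hw]

theorem sum_eta [Nonempty N] (S : Finset N) : ∑ i, eta S i = 0 := by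
  simp only [eta, sum_sub_distrib, sum_ite_mem, univ_inter, sum_const, nsmul_eq_mul, mul_one,
    card_univ]
  field_simp
  ring

theorem sum_phi [Nonempty N] (v : Finset N → ℝ) (x : EuclideanSpace ℝ N) :
    ∑ i, phi v x i = 0 :=
  calc ∑ i, phi v x i = ⟪indic univ, phi v x⟫ := by rw [inner_indic]
    _ = ∑ S ∈ univ.filter (· ≠ ∅), max 0 (excess v S x) * ⟪indic univ, eta S⟫ := by
      simp only [phi, inner_sum, real_inner_smul_right]
    _ = 0 := by simp [inner_indic, sum_eta]

theorem inner_phi (v : Finset N → ℝ) (x : EuclideanSpace ℝ N) {w : EuclideanSpace ℝ N}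
    (hw : ∑ i, w i = 0) :
    ⟪phi v x, w⟫ = ∑ S ∈ univ.filter (· ≠ ∅), max 0 (excess v S x) * ⟪indic S, w⟫ := by
  simp only [phi, sum_inner, real_inner_smul_left, inner_eta _ hw]

theorem excess_eq_sub_inner (v : Finset N → ℝ) (S : Finset N) (x : EuclideanSpace ℝ N) :
    excess v S x = v S - ⟪indic S, x⟫ := by
  rw [excess, inner_indic]

theorem hasFDerivAt_excess (v : Finset N → ℝ) (S : Finset N) (x : EuclideanSpace ℝ N) :
    HasFDerivAt (excess v S) (-innerSL ℝ (indic S)) x := by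
  simp only [funext (excess_eq_sub_inner v S)]
  exact ((innerSL ℝ (indic S)).hasFDerivAt).const_sub (v S)

theorem hasFDerivAt_dissat (v : Finset N → ℝ) (x : EuclideanSpace ℝ N) :
    HasFDerivAt (dissat v)
      (-∑ S ∈ univ.filter (· ≠ ∅), max 0 (excess v S x) • innerSL ℝ (indic S)) x := by
  have hsum : HasFDerivAt (fun y => ∑ S ∈ univ.filter (· ≠ ∅), max 0 (excess v S y) ^ 2)
      (∑ S ∈ univ.filter (· ≠ ∅), (2 * max 0 (excess v S x)) • -innerSL ℝ (indic S)) x :=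
    HasFDerivAt.fun_sum fun S _ =>
      (hasDerivAt_max_zero_sq _).comp_hasFDerivAt x (hasFDerivAt_excess v S x)
  refine (hsum.const_mul (1 / 2)).congr_fderiv ?_
  rw [Finset.smul_sum, ← Finset.sum_neg_distrib]
  refine Finset.sum_congr rfl fun S _ => ?_
  rw [smul_smul, smul_neg, ← neg_smul, ← mul_assoc]
  norm_num

theorem hasDerivAt_dissat_comp (v : Finset N → ℝ) {γ : ℝ → EuclideanSpace ℝ N}
    {γ' : EuclideanSpace ℝ N} {t : ℝ} (hγ : HasDerivAt γ γ' t) (hγ' : ∑ i, γ' i = 0) :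
    HasDerivAt (fun s => dissat v (γ s)) (-⟪phi v (γ t), γ'⟫) t := by
  refine ((hasFDerivAt_dissat v (γ t)).comp_hasDerivAt t hγ).congr_deriv ?_
  simp [inner_phi _ _ hγ']

theorem excess_le_inner_indic_sub {v : Finset N → ℝ} {y : EuclideanSpace ℝ N} (hy : y ∈ core v)
    {S : Finset N} (hS : S.Nonempty) (x : EuclideanSpace ℝ N) :
    excess v S x ≤ ⟪indic S, y - x⟫ := by
  have hyS : excess v S y ≤ 0 := hy.2 S hS
  rw [inner_sub_right, inner_indic, inner_indic]
  rw [excess] at hyS ⊢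
  linarith

theorem two_mul_dissat_le_inner_phi {v : Finset N → ℝ} {x y : EuclideanSpace ℝ N}
    (hy : y ∈ core v) (hx : ∑ i, x i = 0) : 2 * dissat v x ≤ ⟪phi v x, y - x⟫ := by
  have hy0 : ∑ i, y i = 0 := hy.1
  have hw : ∑ i, (y - x) i = 0 := by simp [Finset.sum_sub_distrib, hy0, hx]
  rw [inner_phi _ _ hw, dissat, ← mul_assoc, mul_one_div_cancel two_ne_zero, one_mul]
  refine Finset.sum_le_sum fun S hS => ?_
  have hSne : S.Nonempty := nonempty_iff_ne_empty.mpr (mem_filter.mp hS).2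
  have he := excess_le_inner_indic_sub hy hSne x
  rcases le_total (excess v S x) 0 with hneg | hpos
  · simp [max_eq_left hneg]
  · rw [max_eq_right hpos, sq]
    exact mul_le_mul_of_nonneg_left he hpos

theorem dissat_pos_of_notMem_core {v : Finset N → ℝ} {x : EuclideanSpace ℝ N}
    (hx : ∑ i, x i = 0) (hxc : x ∉ core v) : 0 < dissat v x := by
  obtain ⟨S, hSne, hS⟩ : ∃ S : Finset N, S.Nonempty ∧ 0 < excess v S x := by
    simpa [core, hx] using hxc
  refine mul_pos one_half_pos (Finset.sum_pos' (fun _ _ => sq_nonneg _) ⟨S, ?_, ?_⟩)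
  · simpa using hSne.ne_empty
  · simpa [max_eq_right hS.le] using pow_pos hS 2

theorem stmt_13_general [Nonempty N] (v : Finset N → ℝ)
    (hbal : (core v).Nonempty) (γ : ℝ → EuclideanSpace ℝ N)
    (hγX : ∀ t, (∑ i, γ t i) = 0)
    (hγ : ∀ t, HasDerivAt γ (phi v (γ t)) t)
    (t : ℝ) (ht : γ t ∉ core v) :
    HasDerivAt (fun s => dissat v (γ s)) (-‖phi v (γ t)‖^2) t ∧
      -‖phi v (γ t)‖^2 < 0 := by
  have hderiv := hasDerivAt_dissat_comp v (hγ t) (sum_phi v (γ t))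
  rw [real_inner_self_eq_norm_sq] at hderiv
  refine ⟨hderiv, ?_⟩
  obtain ⟨y, hy⟩ := hbal
  have hinner : 0 < ⟪phi v (γ t), y - γ t⟫ := by
    linarith [dissat_pos_of_notMem_core (hγX t) ht, two_mul_dissat_le_inner_phi hy (hγX t)]
  have hφ : phi v (γ t) ≠ 0 := fun h => by simp [h] at hinner
  exact neg_neg_of_pos (pow_pos (norm_pos_iff.mpr hφ) 2)

theorem stmt_13 [Nonempty N] (v : Finset N → ℝ) (hv : v univ = 0)
    (hbal : (core v).Nonempty) (γ : ℝ → EuclideanSpace ℝ N)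
    (hγX : ∀ t, (∑ i, γ t i) = 0)
    (hγ : ∀ t, HasDerivAt γ (phi v (γ t)) t)
    (t : ℝ) (ht : γ t ∉ core v) :
    HasDerivAt (fun s => dissat v (γ s)) (-‖phi v (γ t)‖^2) t ∧
      -‖phi v (γ t)‖^2 < 0 :=
  stmt_13_general v hbal γ hγX hγ t ht
end
end

section
/- The dissatisfaction field ϑ is uniformly unbounded on X: for every α > 0 there exists a compact set K ⊆ X such that ϑ(x) ≥ α for all x ∈ X \ K. In particular, for ε > 0, every x outside the ε-core C_ε(v) satisfies ϑ(x) > ε²/2. -/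
open Finset
open scoped RealInnerProductSpace

noncomputable section
variable {N : Type*} [Fintype N] [DecidableEq N]

/-!
Outside `K = {x ∈ X | e_S(x) ≤ √(2α) for all S}` some coalition has excess above `√(2α)`,
and that single term already gives `ϑ(x) > α`. The set `K` is compact: the singleton excesses
bound every coordinate from below, and on the hyperplane `x(N) = 0` a coordinate bounded below
by `a i` is bounded above by `a i - ∑ j, a j`. The `ε`-core statement is the same one-term
estimate.
-/

theorem isCompact_setOf_sum_eq_zero_forall_le {ι : Type*} [Fintype ι] (a : ι → ℝ) :
    IsCompact {x : EuclideanSpace ℝ ι | ∑ i, x i = 0 ∧ ∀ i, a i ≤ x i} := by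
  have hbox : IsCompact (EuclideanSpace.equiv ι ℝ ⁻¹' Set.Icc a (a - fun _ => ∑ j, a j)) :=
    (EuclideanSpace.equiv ι ℝ).toHomeomorph.isCompact_preimage.2 isCompact_Icc
  refine hbox.of_isClosed_subset ?_ ?_
  · rw [Set.ofPred_and, Set.ofPred_forall]
    exact (isClosed_eq (by fun_prop) continuous_const).inter <|
      isClosed_iInter fun i => isClosed_le continuous_const (by fun_prop)
  · rintro x ⟨hsum, hlow⟩
    refine ⟨hlow, fun i => ?_⟩
    have hi : x i - a i ≤ ∑ j, (x j - a j) :=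
      single_le_sum (f := fun j => x j - a j) (fun j _ => sub_nonneg.2 (hlow j)) (mem_univ i)
    rw [sum_sub_distrib, hsum] at hi
    show x i ≤ a i - ∑ j, a j
    linarith

theorem isCompact_setOf_sum_eq_zero_excess_le {ι : Type*} [Fintype ι] (v : Finset ι → ℝ)
    (c : ℝ) : IsCompact {x : EuclideanSpace ℝ ι |
      ∑ i, x i = 0 ∧ ∀ S : Finset ι, S.Nonempty → excess v S x ≤ c} := by
  refine (isCompact_setOf_sum_eq_zero_forall_le fun i => v {i} - c).of_isClosed_subset ?_ ?_
  · simp only [Set.ofPred_and, Set.ofPred_forall]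
    exact (isClosed_eq (by fun_prop) continuous_const).inter <|
      isClosed_iInter fun S => isClosed_iInter fun _ =>
        isClosed_le (by unfold excess; fun_prop) continuous_const
  · rintro x ⟨hsum, hexcess⟩
    refine ⟨hsum, fun i => ?_⟩
    have := hexcess {i} (singleton_nonempty i)
    rw [excess, sum_singleton] at this
    linarith

theorem excess_sq_div_two_le_dissat (v : Finset N → ℝ) (x : EuclideanSpace ℝ N) {S : Finset N}
    (hS : S.Nonempty) (he : 0 ≤ excess v S x) : excess v S x ^ 2 / 2 ≤ dissat v x := by
  have hmem : S ∈ univ.filter (· ≠ (∅ : Finset N)) := by simp [hS.ne_empty]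
  have := single_le_sum (f := fun T => (max 0 (excess v T x)) ^ 2) (fun T _ => sq_nonneg _) hmem
  rw [max_eq_right he] at this
  rw [dissat]
  linarith

theorem sq_div_two_lt_dissat (v : Finset N → ℝ) (x : EuclideanSpace ℝ N) {S : Finset N}
    (hS : S.Nonempty) {t : ℝ} (ht : 0 ≤ t) (hlt : t < excess v S x) : t ^ 2 / 2 < dissat v x :=
  calc t ^ 2 / 2 < excess v S x ^ 2 / 2 := by gcongr
    _ ≤ dissat v x := excess_sq_div_two_le_dissat v x hS (ht.trans hlt.le)

theorem stmt_15_general (v : Finset N → ℝ) :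
    (∀ α > (0:ℝ), ∃ K : Set (EuclideanSpace ℝ N),
        K ⊆ {x | (∑ i, x i) = 0} ∧ IsCompact K ∧
        ∀ x : EuclideanSpace ℝ N, (∑ i, x i) = 0 → x ∉ K → α ≤ dissat v x) ∧
      ∀ ε > (0:ℝ), ∀ x : EuclideanSpace ℝ N, (∑ i, x i) = 0 →
        (∃ S : Finset N, S.Nonempty ∧ S ≠ univ ∧ (∑ i ∈ S, x i) < v S - ε) →
          ε^2 / 2 < dissat v x := by
  constructor
  · intro α hα
    set c := √(2 * α)
    refine ⟨{x | ∑ i, x i = 0 ∧ ∀ S : Finset N, S.Nonempty → excess v S x ≤ c},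
      fun x hx => hx.1, isCompact_setOf_sum_eq_zero_excess_le v c, fun x hsum hxK => ?_⟩
    obtain ⟨S, hS, hcS⟩ : ∃ S : Finset N, S.Nonempty ∧ c < excess v S x := by
      simpa [hsum] using hxK
    have hc : c ^ 2 / 2 = α := by rw [Real.sq_sqrt (by positivity)]; ring
    exact hc ▸ (sq_div_two_lt_dissat v x hS (Real.sqrt_nonneg _) hcS).le
  · rintro ε hε x - ⟨S, hS, -, hlt⟩
    exact sq_div_two_lt_dissat v x hS hε.le (by rw [excess]; linarith)

theorem stmt_15 [Nonempty N] (v : Finset N → ℝ) (hv : v univ = 0)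
    (hbal : (core v).Nonempty) :
    (∀ α > (0:ℝ), ∃ K : Set (EuclideanSpace ℝ N),
        K ⊆ {x | (∑ i, x i) = 0} ∧ IsCompact K ∧
        ∀ x : EuclideanSpace ℝ N, (∑ i, x i) = 0 → x ∉ K → α ≤ dissat v x) ∧
      ∀ ε > (0:ℝ), ∀ x : EuclideanSpace ℝ N, (∑ i, x i) = 0 →
        (∃ S : Finset N, S.Nonempty ∧ S ≠ univ ∧ (∑ i ∈ S, x i) < v S - ε) →
          ε^2 / 2 < dissat v x :=
  stmt_15_general v
end
end
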